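/- arXiv:1703.01924 — 6 statements merged into one kernel-verified Lean document; each statement's English description precedes it below -/
import Mathlib

section
/- I_N is a coherent set of indifferent gambles: 0 ∈ I_N; no gamble f with f ≥ 0 and f ≠ 0 belongs to I_N, and no gamble f with f ≤ 0 and f ≠ 0 belongs to I_N; I_N is closed under multiplication by arbitrary real scalars; and I_N is closed under addition. -/
/-!
Permuting coordinates is a bijection of `X^N`, so `σ^t f` has the same total sum as `f`.
Hence every gamble in `I_N` sums to zero over the finite set `X^N`, and a gamble of constant
sign with zero sum vanishes.
-/

namespace ExchPaper

/-- The lift of a permutation `σ` of `{1,…,N}` to gambles on `X^N`: `(σ^t f)(x) = f(σx)`. -/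
def lift {X : Type*} (N : ℕ) (σ : Equiv.Perm (Fin N)) (f : (Fin N → X) → ℝ) :
    (Fin N → X) → ℝ :=
  fun x => f (fun k => x (σ k))

/-- `I_N`: the linear span of `{f − σ^t f : f ∈ L(X^N), σ a permutation of {1,…,N}}`. -/
def IN (X : Type*) (N : ℕ) : Submodule ℝ ((Fin N → X) → ℝ) :=
  Submodule.span ℝ
    {g | ∃ (f : (Fin N → X) → ℝ) (σ : Equiv.Perm (Fin N)), g = f - lift N σ f}

section

variable {X : Type*} [Fintype X] {N : ℕ}

theorem sum_lift (σ : Equiv.Perm (Fin N)) (f : (Fin N → X) → ℝ) :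
    ∑ x, lift N σ f x = ∑ x, f x :=
  (σ.symm.arrowCongr (Equiv.refl X)).sum_comp f

theorem sum_eq_zero_of_mem_IN {g : (Fin N → X) → ℝ} (hg : g ∈ IN X N) : ∑ x, g x = 0 := by
  induction hg using Submodule.span_induction with
  | mem g hg =>
    obtain ⟨f, σ, rfl⟩ := hg
    simp only [Pi.sub_apply, Finset.sum_sub_distrib, sum_lift, sub_self]
  | zero => simp
  | add f g _ _ hf hg => simp only [Pi.add_apply, Finset.sum_add_distrib, hf, hg, add_zero]
  | smul a f _ hf => simp only [Pi.smul_apply, smul_eq_mul, ← Finset.mul_sum, hf, mul_zero]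

theorem notMem_IN_of_nonneg {f : (Fin N → X) → ℝ} (hf : 0 ≤ f) (hne : f ≠ 0) : f ∉ IN X N :=
  fun hmem => hne ((Fintype.sum_eq_zero_iff_of_nonneg hf).1 (sum_eq_zero_of_mem_IN hmem))

end

theorem statement_4_general (X : Type*) [Fintype X] (N : ℕ) :
    (0 : (Fin N → X) → ℝ) ∈ IN X N ∧
    (∀ f : (Fin N → X) → ℝ, (∀ x, 0 ≤ f x) → f ≠ 0 → f ∉ IN X N) ∧
    (∀ f : (Fin N → X) → ℝ, (∀ x, f x ≤ 0) → f ≠ 0 → f ∉ IN X N) ∧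
    (∀ f ∈ IN X N, ∀ a : ℝ, a • f ∈ IN X N) ∧
    (∀ f ∈ IN X N, ∀ g ∈ IN X N, f + g ∈ IN X N) := by
  refine ⟨zero_mem _, fun f hf hne => notMem_IN_of_nonneg hf hne, fun f hf hne hmem => ?_,
    fun f hf a => (IN X N).smul_mem a hf, fun f hf g hg => add_mem hf hg⟩
  exact notMem_IN_of_nonneg (f := -f) (fun x => neg_nonneg.2 (hf x)) (neg_ne_zero.2 hne)
    (neg_mem hmem)

/-- `I_N` is a coherent set of indifferent gambles: `0 ∈ I_N`; no nonzero
nonnegative gamble and no nonzero nonpositive gamble belongs to `I_N`; `I_N` is closed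
under multiplication by arbitrary real scalars and under addition. -/
theorem statement_4 (X : Type*) [Fintype X] [Nonempty X] (N : ℕ) (hN : 0 < N) :
    (0 : (Fin N → X) → ℝ) ∈ IN X N ∧
    (∀ f : (Fin N → X) → ℝ, (∀ x, 0 ≤ f x) → f ≠ 0 → f ∉ IN X N) ∧
    (∀ f : (Fin N → X) → ℝ, (∀ x, f x ≤ 0) → f ≠ 0 → f ∉ IN X N) ∧
    (∀ f ∈ IN X N, ∀ a : ℝ, a • f ∈ IN X N) ∧
    (∀ f ∈ IN X N, ∀ g ∈ IN X N, f + g ∈ IN X N) :=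
  statement_4_general X N

end ExchPaper
end

section
/- The map Hy_N and the map g ↦ Σ_{m ∈ C_N} g(m)·1_{A_m} are mutually inverse up to I_N: for every g ∈ L(C_N), Hy_N(Σ_{m ∈ C_N} g(m)·1_{A_m}) = g, and for every f ∈ L(X^N), Σ_{m ∈ C_N} Hy_N(f)(m)·1_{A_m} − f ∈ I_N. Consequently the induced map [f] ↦ Hy_N(f) is a linear bijection from the quotient space L(X^N)/I_N onto L(C_N). -/
/-!
The count vector is a complete invariant of the permutation action on `X^N`: sequences with
equal count vectors are rearrangements of each other (glue bijections between the fibres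
`{k | x k = z}`). Double counting pairs `(y, σ) ∈ A_{T x} × S_N` then shows that `Hy_N(f)(T x)`
is the average `(1/N!) Σ_σ (σ^t f)(x)`, so `x ↦ Hy_N(f)(T x)` differs from `f` by an average of
the generators `σ^t f − f` of `I_N`. Hence `ker Hy_N = I_N`, and `Hy_N` is onto because every
`A_m` with `m ∈ C_N` is nonempty.
-/

namespace ExchPaper

/-- The count vector `T(x)` of a sequence `x ∈ X^N`: `T(x)_z = #{k : x_k = z}`. -/
def countVec {X : Type*} [Fintype X] [DecidableEq X] (N : ℕ) (x : Fin N → X) : X → ℕ :=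
  fun z => (Finset.univ.filter (fun k => x k = z)).card

/-- The set of count vectors `C_N = {m ∈ ℕ^X : Σ_z m_z = N}`. -/
def CNset (X : Type*) [Fintype X] (N : ℕ) : Set (X → ℕ) :=
  {m | ∑ z, m z = N}

lemma CNset_finite (X : Type*) [Fintype X] (N : ℕ) : (CNset X N).Finite := by
  apply Set.Finite.subset (Set.Finite.pi (fun _ : X => Set.finite_Iic N))
  intro m hm
  simp only [Set.mem_pi, Set.mem_univ, Set.mem_Iic, forall_true_left]
  intro z
  calc m z ≤ ∑ w, m w := Finset.single_le_sum (fun i _ => Nat.zero_le (m i)) (Finset.mem_univ z)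
  _ = N := hm

noncomputable instance (X : Type*) [Fintype X] (N : ℕ) : Fintype (CNset X N) :=
  (CNset_finite X N).fintype

/-- The permutation invariant atom `A_m = {x ∈ X^N : T(x) = m}`. -/
def atom {X : Type*} [Fintype X] [DecidableEq X] (N : ℕ) (m : X → ℕ) : Finset (Fin N → X) :=
  Finset.univ.filter (fun x => countVec N x = m)

/-- `Hy_N(f)(m) = (1/|A_m|) Σ_{y ∈ A_m} f(y)`. -/
noncomputable def Hy {X : Type*} [Fintype X] [DecidableEq X] (N : ℕ)
    (f : (Fin N → X) → ℝ) (m : X → ℕ) : ℝ :=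
  (1 / ((atom N m).card : ℝ)) * ∑ y ∈ atom N m, f y

/-- `Hy_N(f)` as a gamble on `C_N`. -/
noncomputable def HyFun {X : Type*} [Fintype X] [DecidableEq X] (N : ℕ)
    (f : (Fin N → X) → ℝ) : CNset X N → ℝ :=
  fun m => Hy N f m.1

section

variable {X : Type*} [Fintype X] [DecidableEq X] {N : ℕ}

lemma countVec_apply (x : Fin N → X) (z : X) : countVec N x z = Fintype.card {k // x k = z} :=
  (Fintype.card_subtype _).symm

lemma countVec_comp_perm (x : Fin N → X) (σ : Equiv.Perm (Fin N)) :
    countVec N (x ∘ σ) = countVec N x := by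
  funext z
  simp only [countVec_apply]
  exact Fintype.card_congr (σ.subtypeEquiv fun _ => Iff.rfl)

lemma exists_perm_of_countVec_eq {x y : Fin N → X} (h : countVec N x = countVec N y) :
    ∃ σ : Equiv.Perm (Fin N), x ∘ σ = y := by
  have e : ∀ z, {k // y k = z} ≃ {k // x k = z} := fun z =>
    Fintype.equivOfCardEq (by rw [← countVec_apply, ← countVec_apply, h])
  exact ⟨Equiv.ofFiberEquiv e, funext (Equiv.ofFiberEquiv_map e)⟩

lemma countVec_mem_CNset (x : Fin N → X) : countVec N x ∈ CNset X N := by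
  simp only [CNset, Set.mem_ofPred_eq, countVec_apply, ← Fintype.card_sigma,
    Fintype.card_congr (Equiv.sigmaFiberEquiv x), Fintype.card_fin]

lemma exists_countVec_eq {m : X → ℕ} (hm : m ∈ CNset X N) :
    ∃ x : Fin N → X, countVec N x = m := by
  have hcard : Fintype.card (Σ z, Fin (m z)) = N := by simpa [CNset] using hm
  let e := Fintype.equivFinOfCardEq hcard
  refine ⟨fun k => (e.symm k).1, funext fun z => ?_⟩
  rw [countVec_apply, ← Fintype.card_fin (m z)]
  exact Fintype.card_congr ((e.symm.subtypeEquiv fun _ => Iff.rfl).trans (Equiv.sigmaSubtype z))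

lemma mem_atom {x : Fin N → X} {m : X → ℕ} : x ∈ atom N m ↔ countVec N x = m := by
  simp [atom]

lemma sum_mul_indicator_atom (g : CNset X N → ℝ) (x : Fin N → X) :
    ∑ m : CNset X N, g m * (if x ∈ atom N m.1 then (1 : ℝ) else 0)
      = g ⟨countVec N x, countVec_mem_CNset x⟩ := by
  rw [Fintype.sum_eq_single ⟨countVec N x, countVec_mem_CNset x⟩ fun m hm => ?_]
  · simp [mem_atom]
  · have : ¬ countVec N x = m.1 := fun h => hm (Subtype.ext h.symm)
    simp [mem_atom, this]

lemma sum_atom_comp_perm (f : (Fin N → X) → ℝ) (σ : Equiv.Perm (Fin N)) (m : X → ℕ) :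
    ∑ y ∈ atom N m, f (y ∘ σ) = ∑ y ∈ atom N m, f y :=
  Finset.sum_nbij' (· ∘ σ) (· ∘ σ.symm)
    (fun y hy => by simpa [mem_atom, countVec_comp_perm] using hy)
    (fun y hy => by simpa [mem_atom, countVec_comp_perm] using hy)
    (fun y _ => by ext; simp) (fun y _ => by ext; simp) (fun _ _ => rfl)

lemma Hy_lift (f : (Fin N → X) → ℝ) (σ : Equiv.Perm (Fin N)) (m : X → ℕ) :
    Hy N (lift N σ f) m = Hy N f m := by
  simp only [Hy, lift]
  congr 1
  exact sum_atom_comp_perm f σ m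

lemma sum_perm_comp_eq_of_countVec_eq (f : (Fin N → X) → ℝ) {x y : Fin N → X}
    (h : countVec N x = countVec N y) :
    ∑ σ : Equiv.Perm (Fin N), f (x ∘ σ) = ∑ σ : Equiv.Perm (Fin N), f (y ∘ σ) := by
  obtain ⟨τ, rfl⟩ := exists_perm_of_countVec_eq h
  exact (Equiv.sum_comp (Equiv.mulLeft τ) fun σ => f (x ∘ σ)).symm

lemma card_atom_mul_sum_perm_comp (f : (Fin N → X) → ℝ) (x : Fin N → X) :
    ((atom N (countVec N x)).card : ℝ) * ∑ σ : Equiv.Perm (Fin N), f (x ∘ σ)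
      = N.factorial * ∑ y ∈ atom N (countVec N x), f y := by
  set A := atom N (countVec N x)
  calc (A.card : ℝ) * ∑ σ : Equiv.Perm (Fin N), f (x ∘ σ)
      = ∑ y ∈ A, ∑ σ : Equiv.Perm (Fin N), f (y ∘ σ) := by
        rw [← nsmul_eq_mul, ← Finset.sum_const]
        exact Finset.sum_congr rfl fun y hy =>
          (sum_perm_comp_eq_of_countVec_eq f (mem_atom.1 hy)).symm
    _ = ∑ σ : Equiv.Perm (Fin N), ∑ y ∈ A, f (y ∘ σ) := Finset.sum_comm
    _ = ∑ _σ : Equiv.Perm (Fin N), ∑ y ∈ A, f y :=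
        Finset.sum_congr rfl fun σ _ => sum_atom_comp_perm f σ _
    _ = N.factorial * ∑ y ∈ A, f y := by
        rw [Finset.sum_const, Finset.card_univ, Fintype.card_perm, Fintype.card_fin, nsmul_eq_mul]

lemma Hy_countVec_eq_average (f : (Fin N → X) → ℝ) (x : Fin N → X) :
    Hy N f (countVec N x) = (N.factorial : ℝ)⁻¹ * ∑ σ : Equiv.Perm (Fin N), lift N σ f x := by
  have hA : ((atom N (countVec N x)).card : ℝ) ≠ 0 :=
    Nat.cast_ne_zero.2 (Finset.card_ne_zero_of_mem (mem_atom.2 rfl))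
  have hlift : ∑ σ : Equiv.Perm (Fin N), lift N σ f x = ∑ σ : Equiv.Perm (Fin N), f (x ∘ σ) := rfl
  rw [Hy, hlift]
  field_simp
  linarith [card_atom_mul_sum_perm_comp f x]

lemma Hy_countVec_sub_mem_IN (f : (Fin N → X) → ℝ) :
    (fun x => Hy N f (countVec N x)) - f ∈ IN X N := by
  have haverage : (fun x => Hy N f (countVec N x)) - f
      = -((N.factorial : ℝ)⁻¹ • ∑ σ : Equiv.Perm (Fin N), (f - lift N σ f)) := by
    funext x
    simp only [Pi.sub_apply, Pi.neg_apply, Pi.smul_apply, Finset.sum_apply, smul_eq_mul,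
      Finset.sum_sub_distrib, Finset.sum_const, Finset.card_univ, Fintype.card_perm,
      Fintype.card_fin, nsmul_eq_mul, Pi.mul_apply, Pi.natCast_apply, Hy_countVec_eq_average]
    field_simp
    ring
  rw [haverage]
  exact neg_mem (Submodule.smul_mem _ _
    (Submodule.sum_mem _ fun σ _ => Submodule.subset_span ⟨f, σ, rfl⟩))

lemma HyFun_comp_countVec (g : CNset X N → ℝ) :
    HyFun N (fun x => g ⟨countVec N x, countVec_mem_CNset x⟩) = g := by
  funext m
  obtain ⟨x, hx⟩ := exists_countVec_eq m.2
  have hA : ((atom N m.1).card : ℝ) ≠ 0 :=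
    Nat.cast_ne_zero.2 (Finset.card_ne_zero_of_mem (mem_atom.2 hx))
  have hconst : ∀ y ∈ atom N m.1, g ⟨countVec N y, countVec_mem_CNset y⟩ = g m :=
    fun y hy => congrArg g (Subtype.ext (mem_atom.1 hy))
  rw [HyFun, Hy, Finset.sum_congr rfl hconst, Finset.sum_const, nsmul_eq_mul]
  field_simp

variable (X N) in
noncomputable def HyL : ((Fin N → X) → ℝ) →ₗ[ℝ] (CNset X N → ℝ) where
  toFun := HyFun N
  map_add' f g := by
    funext m
    simp [HyFun, Hy, Finset.sum_add_distrib, mul_add]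
  map_smul' r f := by
    funext m
    simp only [HyFun, Hy, RingHom.id_apply, Pi.smul_apply, smul_eq_mul, ← Finset.mul_sum]
    ring

lemma HyL_surjective : Function.Surjective (HyL X N) :=
  fun g => ⟨_, HyFun_comp_countVec g⟩

lemma ker_HyL : LinearMap.ker (HyL X N) = IN X N := by
  apply le_antisymm
  · intro f hf
    have hzero : (fun x => Hy N f (countVec N x)) = 0 :=
      funext fun x => congrFun (LinearMap.mem_ker.1 hf) ⟨countVec N x, countVec_mem_CNset x⟩
    simpa [hzero] using Hy_countVec_sub_mem_IN f
  · rw [IN, Submodule.span_le]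
    rintro _ ⟨f, σ, rfl⟩
    rw [SetLike.mem_coe, LinearMap.mem_ker, map_sub, sub_eq_zero]
    exact funext fun m => (Hy_lift f σ m).symm

end

theorem statement_7_general (X : Type*) [Fintype X] [DecidableEq X] (N : ℕ) :
    (∀ g : CNset X N → ℝ,
        HyFun N (fun x => ∑ m : CNset X N, g m * (if x ∈ atom N m.1 then (1 : ℝ) else 0)) = g) ∧
    (∀ f : (Fin N → X) → ℝ,
        (fun x => ∑ m : CNset X N, Hy N f m.1 * (if x ∈ atom N m.1 then (1 : ℝ) else 0)) - f
          ∈ IN X N) ∧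
    (∃ e : (((Fin N → X) → ℝ) ⧸ IN X N) ≃ₗ[ℝ] (CNset X N → ℝ),
        ∀ f : (Fin N → X) → ℝ, e (Submodule.Quotient.mk f) = HyFun N f) := by
  simp only [sum_mul_indicator_atom]
  exact ⟨HyFun_comp_countVec, Hy_countVec_sub_mem_IN,
    (Submodule.quotEquivOfEq _ _ ker_HyL.symm).trans
      ((HyL X N).quotKerEquivOfSurjective HyL_surjective), fun _ => rfl⟩

/-- `Hy_N` and `g ↦ Σ_{m ∈ C_N} g(m)·1_{A_m}` are mutually inverse up to `I_N`:
for every `g ∈ L(C_N)`, `Hy_N(Σ_m g(m)·1_{A_m}) = g`; for every `f ∈ L(X^N)`,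
`Σ_m Hy_N(f)(m)·1_{A_m} − f ∈ I_N`; consequently the induced map `[f] ↦ Hy_N(f)` is a
linear bijection from the quotient space `L(X^N)/I_N` onto `L(C_N)`. -/
theorem statement_7 (X : Type*) [Fintype X] [DecidableEq X] [Nonempty X] (N : ℕ) (hN : 0 < N) :
    (∀ g : CNset X N → ℝ,
        HyFun N (fun x => ∑ m : CNset X N, g m * (if x ∈ atom N m.1 then (1 : ℝ) else 0)) = g) ∧
    (∀ f : (Fin N → X) → ℝ,
        (fun x => ∑ m : CNset X N, Hy N f m.1 * (if x ∈ atom N m.1 then (1 : ℝ) else 0)) - f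
          ∈ IN X N) ∧
    (∃ e : (((Fin N → X) → ℝ) ⧸ IN X N) ≃ₗ[ℝ] (CNset X N → ℝ),
        ∀ f : (Fin N → X) → ℝ, e (Submodule.Quotient.mk f) = HyFun N f) :=
  statement_7_general X N

end ExchPaper
end

section
/- The map CoMn_N : L(C_N) → V_N(Σ_X), g ↦ Σ_{m ∈ C_N} g(m) B_m, is a linear order isomorphism between the ordered linear spaces L(C_N) (pointwise order) and V_N(Σ_X) (Bernstein order): it is a linear bijection, and for all g1, g2 ∈ L(C_N), g1 ≤ g2 pointwise if and only if CoMn_N(g2) − CoMn_N(g1) is either 0 or a positive linear combination of Bernstein gambles B_m, m ∈ C_N. -/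
/-!
Expanding `B_m` as the monomial `binom(N,m) x^m`, `CoMn_N g` is the restriction to the simplex of a
polynomial that is homogeneous of degree `N`, and every such polynomial arises from a unique `g`.
A polynomial `p` of degree at most `N` agrees on the simplex with the homogeneous polynomial
`Σ_d p_d x^d (Σ_z x_z)^(N - |d|)`, which gives surjectivity. A homogeneous polynomial vanishing
on the simplex vanishes on the open positive orthant by scaling, hence is zero; so the Bernstein
gambles are linearly independent and `CoMn_N` is injective. Finally `{0} ∪ Posi {B_m}` is exactly
the cone of nonnegative combinations of the `B_m`, which by injectivity pulls the Bernstein order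
back to the pointwise order.
-/

namespace ExchPaper

/-- The `X`-simplex `Σ_X = {θ ∈ ℝ^X : θ ≥ 0, Σ_z θ_z = 1}`. -/
def Splx (X : Type*) [Fintype X] : Set (X → ℝ) :=
  {θ | (∀ z, 0 ≤ θ z) ∧ ∑ z, θ z = 1}

/-- The multinomial coefficient `binom(N,m) = N!/∏_z m_z!`. -/
noncomputable def binomR {X : Type*} [Fintype X] (N : ℕ) (m : X → ℕ) : ℝ :=
  (N.factorial : ℝ) / ∏ z, ((m z).factorial : ℝ)

/-- The Bernstein gamble `B_m(θ) = binom(N,m) ∏_z θ_z^{m_z}` on the simplex `Σ_X`. -/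
noncomputable def bern {X : Type*} [Fintype X] (N : ℕ) (m : X → ℕ) : Splx X → ℝ :=
  fun θ => binomR N m * ∏ z, (θ.1 z) ^ (m z)

/-- `V_N(Σ_X)`: the linear space of gambles on `Σ_X` that are restrictions to `Σ_X` of
polynomials on `ℝ^X` with a representation of degree at most `N`. -/
def VN (X : Type*) [Fintype X] (N : ℕ) : Set (Splx X → ℝ) :=
  {h | ∃ p : MvPolynomial X ℝ, p.totalDegree ≤ N ∧ ∀ θ : Splx X, h θ = MvPolynomial.eval θ.1 p}
/-- The positive hull `Posi(S)`: all positive finite linear combinations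
`Σ_{k=1}^n λ_k u_k` with `n ≥ 1`, `λ_k > 0` and `u_k ∈ S`. -/
def Posi {W : Type*} [AddCommMonoid W] [Module ℝ W] (S : Set W) : Set W :=
  {v | ∃ (n : ℕ) (l : Fin n → ℝ) (u : Fin n → W), 0 < n ∧ (∀ k, 0 < l k) ∧
    (∀ k, u k ∈ S) ∧ v = ∑ k, l k • u k}

/-- `CoMn_N : L(C_N) → V_N(Σ_X)`, `g ↦ Σ_{m ∈ C_N} g(m) B_m`. -/
noncomputable def CoMn {X : Type*} [Fintype X] (N : ℕ) (g : CNset X N → ℝ) : Splx X → ℝ :=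
  fun θ => ∑ m : CNset X N, g m * bern N m.1 θ

end ExchPaper

namespace MvPolynomial

variable {σ R : Type*} [Fintype σ] [CommSemiring R]

theorem IsHomogeneous.eval_smul {φ : MvPolynomial σ R} {n : ℕ}
    (hφ : φ.IsHomogeneous n) (c : R) (x : σ → R) : eval (c • x) φ = c ^ n * eval x φ := by
  simp only [eval_eq', Finset.mul_sum, Pi.smul_apply, smul_eq_mul, mul_pow,
    Finset.prod_mul_distrib, Finset.prod_pow_eq_pow_sum]
  refine Finset.sum_congr rfl fun d hd => ?_
  rw [← Finsupp.degree_eq_sum, Finsupp.degree_apply, ← hφ.degree_eq_sum_deg_support hd]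
  ring

noncomputable def homogenizeBySum (N : ℕ) (p : MvPolynomial σ R) :
    MvPolynomial σ R :=
  ∑ d ∈ p.support, monomial d (coeff d p) * (∑ z, X z) ^ (N - d.degree)

theorem isHomogeneous_homogenizeBySum {N : ℕ} {p : MvPolynomial σ R}
    (hp : p.totalDegree ≤ N) : (homogenizeBySum N p).IsHomogeneous N := by
  refine IsHomogeneous.sum _ _ _ fun d hd => ?_
  have hdN : d.degree ≤ N := (le_totalDegree hd).trans hp
  convert (isHomogeneous_monomial (coeff d p) rfl).mul
    ((IsHomogeneous.sum _ _ _ fun z _ => isHomogeneous_X R z).pow (N - d.degree)) using 1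
  omega

theorem eval_homogenizeBySum (N : ℕ) (p : MvPolynomial σ R) {x : σ → R}
    (hx : ∑ z, x z = 1) : eval x (homogenizeBySum N p) = eval x p := by
  nth_rw 2 [← support_sum_monomial_coeff p]
  simp only [homogenizeBySum, map_sum, map_mul, map_pow, eval_X, hx, one_pow, mul_one]

end MvPolynomial

namespace ExchPaper

section Posi

variable {ι W : Type*} [AddCommMonoid W] [Module ℝ W]

theorem sum_smul_mem_Posi {s : Finset ι} (hs : s.Nonempty) {S : Set W} {c : ι → ℝ} {v : ι → W}
    (hc : ∀ i ∈ s, 0 < c i) (hv : ∀ i ∈ s, v i ∈ S) : ∑ i ∈ s, c i • v i ∈ Posi S := by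
  refine ⟨s.card, fun k => c (s.equivFin.symm k), fun k => v (s.equivFin.symm k), hs.card_pos,
    fun k => hc _ (s.equivFin.symm k).2, fun k => hv _ (s.equivFin.symm k).2, ?_⟩
  rw [Equiv.sum_comp s.equivFin.symm (fun i : s => c i • v i)]
  exact (Finset.sum_coe_sort s fun i => c i • v i).symm

variable [Fintype ι]

theorem sum_smul_eq_zero_or_mem_Posi {S : Set W} {c : ι → ℝ} {v : ι → W} (hc : 0 ≤ c)
    (hv : ∀ i, v i ∈ S) : ∑ i, c i • v i = 0 ∨ ∑ i, c i • v i ∈ Posi S := by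
  classical
  have hsupp : ∑ i ∈ Finset.univ with 0 < c i, c i • v i = ∑ i, c i • v i :=
    Finset.sum_filter_of_ne fun i _ hi =>
      (hc i).lt_of_ne fun h0 => hi (by rw [← h0, Pi.zero_apply, zero_smul])
  rw [← hsupp]
  rcases (Finset.univ.filter (fun i => 0 < c i)).eq_empty_or_nonempty with hs | hs
  · exact Or.inl (by rw [hs, Finset.sum_empty])
  · exact Or.inr (sum_smul_mem_Posi hs (fun i hi => (Finset.mem_filter.1 hi).2) fun i _ => hv i)

theorem exists_nonneg_of_mem_Posi_range {v : ι → W} {w : W} (hw : w ∈ Posi (Set.range v)) :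
    ∃ c : ι → ℝ, 0 ≤ c ∧ w = ∑ i, c i • v i := by
  classical
  obtain ⟨n, l, u, -, hl, hu, rfl⟩ := hw
  choose i hi using hu
  refine ⟨∑ k, l k • Pi.single (i k) 1, ?_, ?_⟩
  · exact Finset.sum_nonneg fun k _ => smul_nonneg (hl k).le (Pi.single_nonneg.2 zero_le_one)
  · rw [← Fintype.linearCombination_apply ℝ v, map_sum]
    simp [hi]

theorem eq_zero_or_mem_Posi_range_iff (v : ι → W) (w : W) :
    (w = 0 ∨ w ∈ Posi (Set.range v)) ↔ ∃ c : ι → ℝ, 0 ≤ c ∧ w = ∑ i, c i • v i := by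
  constructor
  · rintro (rfl | hw)
    · exact ⟨0, le_rfl, by simp⟩
    · exact exists_nonneg_of_mem_Posi_range hw
  · rintro ⟨c, hc, rfl⟩
    exact sum_smul_eq_zero_or_mem_Posi hc Set.mem_range_self

end Posi

section Bernstein

open MvPolynomial

variable {X : Type*} [Fintype X]

theorem eq_zero_of_isHomogeneous_of_eval_Splx [Nonempty X] {φ : MvPolynomial X ℝ} {n : ℕ}
    (hφ : φ.IsHomogeneous n) (h : ∀ θ ∈ Splx X, eval θ φ = 0) : φ = 0 := by
  refine funext_set (fun _ => Set.Ioi 0) (fun _ => Set.Ioi_infinite 0) fun x hx => ?_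
  have hx : ∀ z, 0 < x z := fun z => hx z trivial
  have hs : 0 < ∑ z, x z := Finset.sum_pos (fun z _ => hx z) Finset.univ_nonempty
  have hθ : (∑ z, x z)⁻¹ • x ∈ Splx X :=
    ⟨fun z => by simpa using (mul_pos (inv_pos.2 hs) (hx z)).le,
      by simp [← Finset.mul_sum, hs.ne']⟩
  rw [map_zero, ← smul_inv_smul₀ hs.ne' x, hφ.eval_smul, h _ hθ, mul_zero]

theorem binomR_pos (N : ℕ) (m : X → ℕ) : 0 < binomR N m :=
  div_pos (by exact_mod_cast N.factorial_pos)
    (Finset.prod_pos fun z _ => by exact_mod_cast (m z).factorial_pos)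

theorem CoMn_eq_linearCombination (N : ℕ) (g : CNset X N → ℝ) :
    CoMn N g = Fintype.linearCombination ℝ (fun m : CNset X N => bern N m.1) g := by
  funext θ
  simp [CoMn, Fintype.linearCombination_apply, Finset.sum_apply]

noncomputable def CoMnPoly (N : ℕ) (g : CNset X N → ℝ) : MvPolynomial X ℝ :=
  ∑ m : CNset X N, monomial (Finsupp.equivFunOnFinite.symm m.1) (g m * binomR N m.1)

theorem eval_CoMnPoly (N : ℕ) (g : CNset X N → ℝ) (θ : Splx X) :
    eval θ.1 (CoMnPoly N g) = CoMn N g θ := by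
  simp [CoMnPoly, CoMn, bern, eval_monomial, Finsupp.prod_fintype, mul_assoc]

theorem isHomogeneous_CoMnPoly (N : ℕ) (g : CNset X N → ℝ) : (CoMnPoly N g).IsHomogeneous N :=
  IsHomogeneous.sum _ _ _ fun m _ =>
    isHomogeneous_monomial _ (by rw [Finsupp.degree_eq_sum]; exact m.2)

theorem coeff_CoMnPoly (N : ℕ) (g : CNset X N → ℝ) (m : CNset X N) :
    coeff (Finsupp.equivFunOnFinite.symm m.1) (CoMnPoly N g) = g m * binomR N m.1 := by
  classical
  rw [CoMnPoly, coeff_sum, Finset.sum_eq_single m]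
  · rw [coeff_monomial, if_pos rfl]
  · intro m' _ hne
    rw [coeff_monomial, if_neg]
    exact fun h => hne (Subtype.ext (Finsupp.equivFunOnFinite.symm.injective h))
  · exact fun h => absurd (Finset.mem_univ m) h

theorem exists_CoMnPoly_eq {N : ℕ} {q : MvPolynomial X ℝ} (hq : q.IsHomogeneous N) :
    ∃ g : CNset X N → ℝ, CoMnPoly N g = q := by
  refine ⟨fun m => coeff (Finsupp.equivFunOnFinite.symm m.1) q / binomR N m.1, ?_⟩
  ext d
  by_cases hd : d.degree = N
  · have hm : ⇑d ∈ CNset X N := by simpa [CNset, Finsupp.degree_eq_sum] using hd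
    have hcoeff := coeff_CoMnPoly N
      (fun m => coeff (Finsupp.equivFunOnFinite.symm m.1) q / binomR N m.1) ⟨d, hm⟩
    simp only [Finsupp.equivFunOnFinite_symm_coe] at hcoeff
    rw [hcoeff, div_mul_cancel₀ _ (binomR_pos N d).ne']
  · rw [hq.coeff_eq_zero hd, (isHomogeneous_CoMnPoly N _).coeff_eq_zero hd]

theorem linearIndependent_bern [Nonempty X] (N : ℕ) :
    LinearIndependent ℝ (fun m : CNset X N => bern N m.1) := by
  rw [Fintype.linearIndependent_iff]
  intro g hg m
  have hzero : CoMnPoly N g = 0 :=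
    eq_zero_of_isHomogeneous_of_eval_Splx (isHomogeneous_CoMnPoly N g) fun θ hθ => by
      rw [eval_CoMnPoly N g ⟨θ, hθ⟩, CoMn_eq_linearCombination, Fintype.linearCombination_apply,
        hg, Pi.zero_apply]
  have hcoeff := coeff_CoMnPoly N g m
  rw [hzero, coeff_zero] at hcoeff
  exact (mul_eq_zero.1 hcoeff.symm).resolve_right (binomR_pos N m.1).ne'

theorem setOf_bern_eq_range (N : ℕ) :
    {h | ∃ m ∈ CNset X N, h = bern N m} = Set.range (fun m : CNset X N => bern N m.1) := by
  ext h
  simp [eq_comm]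

end Bernstein

theorem statement_12_general (X : Type*) [Fintype X] [Nonempty X] (N : ℕ) :
    (∀ g : CNset X N → ℝ, CoMn N g ∈ VN X N) ∧
    (∀ (a : ℝ) (g g' : CNset X N → ℝ), CoMn N (a • g + g') = a • CoMn N g + CoMn N g') ∧
    (Function.Injective (fun g : CNset X N → ℝ => CoMn N g)) ∧
    (∀ h ∈ VN X N, ∃ g : CNset X N → ℝ, CoMn N g = h) ∧
    (∀ g1 g2 : CNset X N → ℝ,
      (∀ m, g1 m ≤ g2 m) ↔
        (CoMn N g2 - CoMn N g1 = 0 ∨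
          CoMn N g2 - CoMn N g1 ∈ Posi {h | ∃ m ∈ CNset X N, h = bern N m})) := by
  have hinj := (linearIndependent_bern (X := X) N).fintypeLinearCombination_injective
  refine ⟨fun g => ⟨CoMnPoly N g, (isHomogeneous_CoMnPoly N g).totalDegree_le,
      fun θ => (eval_CoMnPoly N g θ).symm⟩, fun a g g' => ?_, ?_, ?_, fun g1 g2 => ?_⟩
  · simp only [CoMn_eq_linearCombination, map_add, map_smul]
  · simpa only [CoMn_eq_linearCombination] using hinj
  · rintro h ⟨p, hp, hph⟩
    obtain ⟨g, hg⟩ := exists_CoMnPoly_eq (MvPolynomial.isHomogeneous_homogenizeBySum hp)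
    refine ⟨g, funext fun θ => ?_⟩
    rw [← eval_CoMnPoly, hg, MvPolynomial.eval_homogenizeBySum N p θ.2.2, hph]
  · rw [setOf_bern_eq_range, eq_zero_or_mem_Posi_range_iff]
    simp only [CoMn_eq_linearCombination, ← map_sub, ← Fintype.linearCombination_apply]
    constructor
    · exact fun hle => ⟨g2 - g1, fun m => sub_nonneg.2 (hle m), rfl⟩
    · rintro ⟨c, hc, hgc⟩ m
      rw [← sub_nonneg, ← Pi.sub_apply, hinj hgc]
      exact hc m

/-- `CoMn_N` is a linear order isomorphism between `L(C_N)` (pointwise order)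
and `V_N(Σ_X)` (Bernstein order): it maps into `V_N(Σ_X)`, is linear and injective, is onto
`V_N(Σ_X)`, and `g1 ≤ g2` pointwise iff `CoMn_N(g2) − CoMn_N(g1)` is `0` or a positive
linear combination of Bernstein gambles. -/
theorem statement_12 (X : Type*) [Fintype X] [Nonempty X] (N : ℕ) (hN : 0 < N) :
    (∀ g : CNset X N → ℝ, CoMn N g ∈ VN X N) ∧
    (∀ (a : ℝ) (g g' : CNset X N → ℝ), CoMn N (a • g + g') = a • CoMn N g + CoMn N g') ∧
    (Function.Injective (fun g : CNset X N → ℝ => CoMn N g)) ∧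
    (∀ h ∈ VN X N, ∃ g : CNset X N → ℝ, CoMn N g = h) ∧
    (∀ g1 g2 : CNset X N → ℝ,
      (∀ m, g1 m ≤ g2 m) ↔
        (CoMn N g2 - CoMn N g1 = 0 ∨
          CoMn N g2 - CoMn N g1 ∈ Posi {h | ∃ m ∈ CNset X N, h = bern N m})) :=
  statement_12_general X N

end ExchPaper
end

section
/- A choice function C on the linear space L_fin of gambles of finite structure on X^ℕ is coherent (with respect to the pointwise ordering) if and only if for every n ∈ ℕ its X^n-marginal C_n, i.e., the restriction of C to nonempty finite subsets of L(X^n), is coherent (with respect to the pointwise ordering on L(X^n)). -/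
namespace ExchPaper

/-- `f` depends only upon the first `n` variables of the sequence. -/
def DependsOn {X : Type*} (n : ℕ) (f : (ℕ → X) → ℝ) : Prop :=
  ∀ x y : ℕ → X, (∀ k < n, x k = y k) → f x = f y

/-- `L(X^n)`, identified (via cylindrical extension) with the subspace of gambles on `X^ℕ`
that depend only upon the first `n` variables. -/
def Ln (X : Type*) (n : ℕ) : Set ((ℕ → X) → ℝ) := {f | DependsOn n f}

/-- `L_fin`: the linear space of all gambles of finite structure on `X^ℕ`. -/
def Lfin (X : Type*) : Set ((ℕ → X) → ℝ) := {f | ∃ n, DependsOn n f}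
/-- The strict pointwise vector ordering on gambles: `f ⋖ g` iff `f ≤ g` pointwise and
`f ≠ g`. -/
def ltPt {α : Type*} (f g : α → ℝ) : Prop := (∀ x, f x ≤ g x) ∧ f ≠ g

/-- Coherence of a choice function `C` whose option sets are the nonempty finite subsets of
the carrier `V` of an ordered vector space, with strict ordering `lt`; axioms C1, C2, C3a,
C3b, C4a, C4b. -/
def CoherentCF {W : Type*} [AddCommGroup W] [Module ℝ W] (V : Set W)
    (lt : W → W → Prop) (C : Set W → Set W) : Prop :=
  -- C1
  (∀ O : Set W, O.Finite → O.Nonempty → O ⊆ V → (C O).Nonempty) ∧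
  -- C2
  (∀ u v : W, u ∈ V → v ∈ V → lt u v → C {u, v} = {v}) ∧
  -- C3a
  (∀ O O1 O2 : Set W, O.Finite → O.Nonempty → O ⊆ V →
      O1.Finite → O1.Nonempty → O1 ⊆ V → O2.Finite → O2.Nonempty → O2 ⊆ V →
      C O2 ⊆ O2 \ O1 → O1 ⊆ O2 → O2 ⊆ O → C O ⊆ O \ O1) ∧
  -- C3b
  (∀ O O1 O2 : Set W, O.Finite → O.Nonempty → O ⊆ V →
      O1.Finite → O1.Nonempty → O1 ⊆ V → O2.Finite → O2.Nonempty → O2 ⊆ V →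
      C O2 ⊆ O1 → O ⊆ O2 \ O1 → C (O2 \ O) ⊆ O1) ∧
  -- C4a
  (∀ l : ℝ, 0 < l → ∀ O1 O2 : Set W, O1.Finite → O1.Nonempty → O1 ⊆ V →
      O2.Finite → O2.Nonempty → O2 ⊆ V →
      O1 ⊆ C O2 → (fun v => l • v) '' O1 ⊆ C ((fun v => l • v) '' O2)) ∧
  -- C4b
  (∀ u : W, u ∈ V → ∀ O1 O2 : Set W, O1.Finite → O1.Nonempty → O1 ⊆ V →
      O2.Finite → O2.Nonempty → O2 ⊆ V →
      O1 ⊆ C O2 → (fun v => v + u) '' O1 ⊆ C ((fun v => v + u) '' O2))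

/-! Each coherence axiom involves only finitely many options, so coherence has finite
character: it holds on a directed union of option sets iff it holds on each of them. And `L_fin`
is the increasing union of the `L(X^n)`. -/

section Coherence

variable {W : Type*} [AddCommGroup W] [Module ℝ W] {lt : W → W → Prop} {C : Set W → Set W}

theorem CoherentCF.mono {U V : Set W} (hVU : V ⊆ U) (h : CoherentCF U lt C) :
    CoherentCF V lt C := by
  obtain ⟨h1, h2, h3a, h3b, h4a, h4b⟩ := h
  refine ⟨?_, ?_, ?_, ?_, ?_, ?_⟩
  · exact fun O hf hne hO => h1 O hf hne (hO.trans hVU)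
  · exact fun u v hu hv => h2 u v (hVU hu) (hVU hv)
  · exact fun O O1 O2 hOf hOn hOs h1f h1n h1s h2f h2n h2s =>
      h3a O O1 O2 hOf hOn (hOs.trans hVU) h1f h1n (h1s.trans hVU) h2f h2n (h2s.trans hVU)
  · exact fun O O1 O2 hOf hOn hOs h1f h1n h1s h2f h2n h2s =>
      h3b O O1 O2 hOf hOn (hOs.trans hVU) h1f h1n (h1s.trans hVU) h2f h2n (h2s.trans hVU)
  · exact fun l hl O1 O2 h1f h1n h1s h2f h2n h2s =>
      h4a l hl O1 O2 h1f h1n (h1s.trans hVU) h2f h2n (h2s.trans hVU)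
  · exact fun u hu O1 O2 h1f h1n h1s h2f h2n h2s =>
      h4b u (hVU hu) O1 O2 h1f h1n (h1s.trans hVU) h2f h2n (h2s.trans hVU)

theorem coherentCF_of_forall_finite {V : Set W}
    (h : ∀ F : Set W, F.Finite → F ⊆ V → ∃ U, F ⊆ U ∧ CoherentCF U lt C) :
    CoherentCF V lt C := by
  refine ⟨?_, ?_, ?_, ?_, ?_, ?_⟩
  · intro O hf hne hO
    obtain ⟨U, hOU, hU⟩ := h O hf hO
    exact hU.1 O hf hne hOU
  · intro u v hu hv hlt
    obtain ⟨U, huvU, hU⟩ := h {u, v} (by simp) (Set.insert_subset hu (by simpa))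
    exact hU.2.1 u v (huvU (by simp)) (huvU (by simp)) hlt
  · intro O O1 O2 hOf hOn hOs h1f h1n h1s h2f h2n h2s
    obtain ⟨U, hFU, hU⟩ := h (O ∪ O1 ∪ O2) ((hOf.union h1f).union h2f)
      (Set.union_subset (Set.union_subset hOs h1s) h2s)
    simp only [Set.union_subset_iff] at hFU
    exact hU.2.2.1 O O1 O2 hOf hOn hFU.1.1 h1f h1n hFU.1.2 h2f h2n hFU.2
  · intro O O1 O2 hOf hOn hOs h1f h1n h1s h2f h2n h2s
    obtain ⟨U, hFU, hU⟩ := h (O ∪ O1 ∪ O2) ((hOf.union h1f).union h2f)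
      (Set.union_subset (Set.union_subset hOs h1s) h2s)
    simp only [Set.union_subset_iff] at hFU
    exact hU.2.2.2.1 O O1 O2 hOf hOn hFU.1.1 h1f h1n hFU.1.2 h2f h2n hFU.2
  · intro l hl O1 O2 h1f h1n h1s h2f h2n h2s
    obtain ⟨U, hFU, hU⟩ := h (O1 ∪ O2) (h1f.union h2f) (Set.union_subset h1s h2s)
    simp only [Set.union_subset_iff] at hFU
    exact hU.2.2.2.2.1 l hl O1 O2 h1f h1n hFU.1 h2f h2n hFU.2
  · intro u hu O1 O2 h1f h1n h1s h2f h2n h2s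
    obtain ⟨U, hFU, hU⟩ := h (insert u (O1 ∪ O2)) ((h1f.union h2f).insert u)
      (Set.insert_subset hu (Set.union_subset h1s h2s))
    simp only [Set.insert_subset_iff, Set.union_subset_iff] at hFU
    exact hU.2.2.2.2.2 u hFU.1 O1 O2 h1f h1n hFU.2.1 h2f h2n hFU.2.2

theorem coherentCF_iff_forall_of_directed {ι : Type*} [Nonempty ι] {S : ι → Set W}
    (hS : Directed (· ⊆ ·) S) :
    CoherentCF (⋃ i, S i) lt C ↔ ∀ i, CoherentCF (S i) lt C := by
  refine ⟨fun h i => h.mono (Set.subset_iUnion S i), fun h => coherentCF_of_forall_finite ?_⟩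
  intro F hF hFS
  obtain ⟨i, hi⟩ := hS.exists_mem_subset_of_finset_subset_biUnion (s := hF.toFinset) (by simpa)
  exact ⟨S i, by simpa using hi, h i⟩

end Coherence

theorem monotone_Ln (X : Type*) : Monotone (Ln X) :=
  fun _ _ hnm _ hf x y hxy => hf x y fun k hk => hxy k (hk.trans_le hnm)

theorem Lfin_eq_iUnion_Ln (X : Type*) : Lfin X = ⋃ n, Ln X n := by
  ext f
  simp [Lfin, Ln]

theorem statement_15_general (X : Type*)
    (C : Set ((ℕ → X) → ℝ) → Set ((ℕ → X) → ℝ)) :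
    CoherentCF (Lfin X) ltPt C ↔ ∀ n : ℕ, CoherentCF (Ln X n) ltPt C := by
  rw [Lfin_eq_iUnion_Ln]
  exact coherentCF_iff_forall_of_directed (monotone_Ln X).directed_le

/-- a choice function `C` on `L_fin` is coherent (pointwise ordering) iff for
every `n` its `X^n`-marginal (the restriction of `C` to nonempty finite subsets of `L(X^n)`)
is coherent (pointwise ordering on `L(X^n)`). -/
theorem statement_15 (X : Type*) [Fintype X] [Nonempty X]
    (C : Set ((ℕ → X) → ℝ) → Set ((ℕ → X) → ℝ)) (hC : ∀ O, C O ⊆ O) :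
    CoherentCF (Lfin X) ltPt C ↔ ∀ n : ℕ, CoherentCF (Ln X n) ltPt C :=
  statement_15_general X C

end ExchPaper
end

section
/- The set I_P := ⋃_{n ∈ ℕ} I_n ⊆ L_fin is a coherent set of indifferent gambles: 0 ∈ I_P; no gamble f with f ≥ 0 and f ≠ 0 belongs to I_P, and no gamble f with f ≤ 0 and f ≠ 0 belongs to I_P; I_P is closed under multiplication by arbitrary real scalars; and I_P is closed under addition. -/
namespace ExchPaper

/-- The lift to gambles on `X^ℕ` of a permutation `σ` of `{1,…,n}` (acting on the first `n`
coordinates of a sequence): `(σ^t f)(x) = f(σx)` where `(σx)_k = x_{σ(k)}` for `k < n` and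
`(σx)_k = x_k` otherwise. -/
def liftSeq {X : Type*} (n : ℕ) (σ : Equiv.Perm (Fin n)) (f : (ℕ → X) → ℝ) :
    (ℕ → X) → ℝ :=
  fun x => f (fun k => if h : k < n then x (σ ⟨k, h⟩) else x k)

/-- `I_n`: the linear span of `{f − σ^t f : f ∈ L(X^n), σ a permutation of {1,…,n}}`,
viewed inside `L_fin` via cylindrical extension. -/
def InSub (X : Type*) (n : ℕ) : Submodule ℝ ((ℕ → X) → ℝ) :=
  Submodule.span ℝ
    {g | ∃ f : (ℕ → X) → ℝ, DependsOn n f ∧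
      ∃ σ : Equiv.Perm (Fin n), g = f - liftSeq n σ f}

/-- `I_P = ⋃_{n ∈ ℕ} I_n`. -/
def IP (X : Type*) : Set ((ℕ → X) → ℝ) := ⋃ n : ℕ, (InSub X n : Set ((ℕ → X) → ℝ))

/-! A permutation of the first `n` coordinates acts on sequences, and `I_n` lies in the kernel
of the symmetrisation `f ↦ ∑_τ f (τ x)` at every point `x`. A nonnegative gamble in that kernel
vanishes at `x`, since `f x` is one of the summands. The spaces `I_n` increase with `n`, so their
union `I_P` is a submodule. -/

open Equiv

section

variable {X : Type*}

/-- `liftSeq n σ f = f ∘ permSeq n σ` holds by definition. -/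
def permSeq (n : ℕ) (σ : Perm (Fin n)) (x : ℕ → X) : ℕ → X :=
  fun k => if h : k < n then x (σ ⟨k, h⟩) else x k

lemma permSeq_one (n : ℕ) (x : ℕ → X) : permSeq n 1 x = x := by
  funext k
  by_cases hk : k < n <;> simp [permSeq, hk]

lemma permSeq_permSeq (n : ℕ) (σ τ : Perm (Fin n)) (x : ℕ → X) :
    permSeq n σ (permSeq n τ x) = permSeq n (τ * σ) x := by
  funext k
  by_cases hk : k < n <;> simp [permSeq, hk]

lemma permSeq_viaFintypeEmbedding {n N : ℕ} (h : n ≤ N) (σ : Perm (Fin n)) (x : ℕ → X) :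
    permSeq N (σ.viaFintypeEmbedding (Fin.castLEEmb h)) x = permSeq n σ x := by
  funext k
  by_cases hk : k < n
  · have hkN : k < N := hk.trans_le h
    have hk_image : (⟨k, hkN⟩ : Fin N) = Fin.castLEEmb h ⟨k, hk⟩ := rfl
    simp only [permSeq, hk, hkN, dif_pos]
    rw [hk_image, Perm.viaFintypeEmbedding_apply_image]
    rfl
  · by_cases hkN : k < N
    · have hk_notMem : (⟨k, hkN⟩ : Fin N) ∉ Set.range (Fin.castLEEmb h) := by
        rintro ⟨i, hi⟩
        have hik : (i : ℕ) = k := congrArg Fin.val hi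
        exact hk (hik ▸ i.2)
      simp only [permSeq, hk, hkN, dif_pos, dif_neg, not_false_eq_true,
        Perm.viaFintypeEmbedding_apply_notMem_range _ _ hk_notMem]
    · simp [permSeq, hk, hkN]

lemma dependsOn_mono {n N : ℕ} (h : n ≤ N) {f : (ℕ → X) → ℝ} (hf : DependsOn n f) :
    DependsOn N f :=
  fun x y hxy => hf x y fun k hk => hxy k (hk.trans_le h)

lemma InSub_mono : Monotone (InSub X) := by
  intro n N h
  refine Submodule.span_le.2 ?_
  rintro g ⟨f, hf, σ, rfl⟩
  refine Submodule.subset_span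
    ⟨f, dependsOn_mono h hf, σ.viaFintypeEmbedding (Fin.castLEEmb h), ?_⟩
  funext x
  simp only [Pi.sub_apply, liftSeq]
  exact congrArg (f x - f ·) (permSeq_viaFintypeEmbedding h σ x).symm

lemma IP_eq_coe_iSup_InSub : IP X = ↑(⨆ n, InSub X n) :=
  (Submodule.coe_iSup_of_directed _ InSub_mono.directed_le).symm

def symmetrize (n : ℕ) (x : ℕ → X) : ((ℕ → X) → ℝ) →ₗ[ℝ] ℝ :=
  ∑ τ : Perm (Fin n), LinearMap.proj (permSeq n τ x)

lemma symmetrize_apply (n : ℕ) (x : ℕ → X) (f : (ℕ → X) → ℝ) :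
    symmetrize n x f = ∑ τ : Perm (Fin n), f (permSeq n τ x) := by
  simp [symmetrize]

lemma symmetrize_liftSeq (n : ℕ) (x : ℕ → X) (σ : Perm (Fin n)) (f : (ℕ → X) → ℝ) :
    symmetrize n x (liftSeq n σ f) = symmetrize n x f := by
  simp only [symmetrize_apply]
  exact Fintype.sum_equiv (Equiv.mulRight σ) _ _ fun τ => congrArg f (permSeq_permSeq n σ τ x)

lemma InSub_le_ker_symmetrize (n : ℕ) (x : ℕ → X) :
    InSub X n ≤ LinearMap.ker (symmetrize n x) := by
  refine Submodule.span_le.2 ?_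
  rintro g ⟨f, -, σ, rfl⟩
  simp [symmetrize_liftSeq]

lemma eq_zero_of_nonneg_of_mem_InSub {n : ℕ} {f : (ℕ → X) → ℝ} (hf : f ∈ InSub X n)
    (hnonneg : 0 ≤ f) : f = 0 := by
  funext x
  have hsum : ∑ τ : Perm (Fin n), f (permSeq n τ x) = 0 := by
    rw [← symmetrize_apply]
    exact InSub_le_ker_symmetrize n x hf
  have hterm := (Finset.sum_eq_zero_iff_of_nonneg fun τ _ => hnonneg (permSeq n τ x)).1 hsum
  simpa only [permSeq_one, Pi.zero_apply] using hterm 1 (Finset.mem_univ _)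

lemma eq_zero_of_nonneg_of_mem_iSup_InSub {f : (ℕ → X) → ℝ} (hf : f ∈ ⨆ n, InSub X n)
    (hnonneg : 0 ≤ f) : f = 0 := by
  obtain ⟨n, hn⟩ := (Submodule.mem_iSup_of_directed _ InSub_mono.directed_le).1 hf
  exact eq_zero_of_nonneg_of_mem_InSub hn hnonneg

end

theorem statement_17_general (X : Type*) :
    (0 : (ℕ → X) → ℝ) ∈ IP X ∧
    (∀ f : (ℕ → X) → ℝ, (∀ x, 0 ≤ f x) → f ≠ 0 → f ∉ IP X) ∧
    (∀ f : (ℕ → X) → ℝ, (∀ x, f x ≤ 0) → f ≠ 0 → f ∉ IP X) ∧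
    (∀ f ∈ IP X, ∀ a : ℝ, a • f ∈ IP X) ∧
    (∀ f ∈ IP X, ∀ g ∈ IP X, f + g ∈ IP X) := by
  simp only [IP_eq_coe_iSup_InSub, SetLike.mem_coe]
  refine ⟨zero_mem _, fun f hf hne hmem => hne ?_, fun f hf hne hmem => hne ?_,
    fun f hf a => Submodule.smul_mem _ a hf, fun f hf g hg => add_mem hf hg⟩
  · exact eq_zero_of_nonneg_of_mem_iSup_InSub hmem hf
  · refine neg_eq_zero.1 (eq_zero_of_nonneg_of_mem_iSup_InSub (neg_mem hmem) fun x => ?_)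
    exact neg_nonneg.2 (hf x)

/-- `I_P = ⋃_n I_n ⊆ L_fin` is a coherent set of indifferent gambles:
`0 ∈ I_P`; no nonzero nonnegative gamble and no nonzero nonpositive gamble belongs to
`I_P`; `I_P` is closed under multiplication by arbitrary real scalars and under
addition. -/
theorem statement_17 (X : Type*) [Fintype X] [Nonempty X] :
    (0 : (ℕ → X) → ℝ) ∈ IP X ∧
    (∀ f : (ℕ → X) → ℝ, (∀ x, 0 ≤ f x) → f ≠ 0 → f ∉ IP X) ∧
    (∀ f : (ℕ → X) → ℝ, (∀ x, f x ≤ 0) → f ≠ 0 → f ∉ IP X) ∧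
    (∀ f ∈ IP X, ∀ a : ℝ, a • f ∈ IP X) ∧
    (∀ f ∈ IP X, ∀ g ∈ IP X, f + g ∈ IP X) :=
  statement_17_general X

end ExchPaper
end

section
/- Let C̃ be a choice function on the space V(Σ_X) of all polynomial gambles on the simplex Σ_X, equipped with the Bernstein ordering determined by the cone {0} ∪ {positive linear combinations of Bernstein gambles B_m with m ∈ C_n, n ∈ ℕ}. Then C̃ is coherent if and only if for every n ∈ ℕ the restriction C̃_n of C̃ to nonempty finite subsets of V_n(Σ_X), with V_n(Σ_X) equipped with the Bernstein ordering determined by the cone {0} ∪ {positive linear combinations of B_m, m ∈ C_n}, is coherent. -/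
namespace ExchPaper

/-- The strict vector ordering associated with a convex cone `K` (containing `0`):
`u ⋖ v` iff `v − u ∈ K` and `u ≠ v`. -/
def ltCone {W : Type*} [AddCommGroup W] (K : Set W) (u v : W) : Prop :=
  v - u ∈ K ∧ u ≠ v
/-- `V(Σ_X) = ⋃_n V_n(Σ_X)`: the space of all polynomial gambles on the simplex. -/
def Vall (X : Type*) [Fintype X] : Set (Splx X → ℝ) := ⋃ n : ℕ, VN X n

/-- The Bernstein gambles of degree `n`: `{B_m : m ∈ C_n}`. -/
def BernSet (X : Type*) [Fintype X] (n : ℕ) : Set (Splx X → ℝ) :=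
  {h | ∃ m : X → ℕ, (∑ z, m z = n) ∧ h = bern n m}

/-- All Bernstein gambles: `{B_m : m ∈ C_n, n ∈ ℕ}`. -/
def BernSetAll (X : Type*) [Fintype X] : Set (Splx X → ℝ) := ⋃ n : ℕ, BernSet X n

section PosiLemmas
variable {W : Type*} [AddCommMonoid W] [Module ℝ W] {S T : Set W}

lemma posi_mono (h : S ⊆ T) : Posi S ⊆ Posi T :=
  fun _ ⟨n, l, u, hn, hl, hu, hv⟩ => ⟨n, l, u, hn, hl, fun k => h (hu k), hv⟩

lemma mem_posi_self {v : W} (h : v ∈ S) : v ∈ Posi S :=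
  ⟨1, fun _ => 1, fun _ => v, one_pos, fun _ => one_pos, fun _ => h, by simp⟩

lemma mem_posi_finset {ι : Type*} (s : Finset ι) (hs : s.Nonempty) (l : ι → ℝ) (u : ι → W)
    (hl : ∀ i ∈ s, 0 < l i) (hu : ∀ i ∈ s, u i ∈ S) :
    (∑ i ∈ s, l i • u i) ∈ Posi S := by
  refine ⟨s.card, fun k => l (s.equivFin.symm k), fun k => u (s.equivFin.symm k),
    Finset.card_pos.2 hs, fun k => hl _ (s.equivFin.symm k).2, fun k => hu _ (s.equivFin.symm k).2, ?_⟩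
  rw [← Finset.sum_attach s (fun i => l i • u i)]
  exact (Fintype.sum_equiv s.equivFin.symm _ _ (fun k => rfl)).symm

lemma posi_smul {c : ℝ} (hc : 0 < c) {v : W} (hv : v ∈ Posi S) : c • v ∈ Posi S := by
  obtain ⟨n, l, u, hn, hl, hu, rfl⟩ := hv
  exact ⟨n, fun k => c * l k, u, hn, fun k => mul_pos hc (hl k), hu,
    by rw [Finset.smul_sum]; simp [smul_smul]⟩

lemma posi_add {v w : W} (hv : v ∈ Posi S) (hw : w ∈ Posi S) : v + w ∈ Posi S := by
  obtain ⟨n, l, u, hn, hl, hu, rfl⟩ := hv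
  obtain ⟨n', l', u', hn', hl', hu', rfl⟩ := hw
  have := mem_posi_finset (S := S) (Finset.univ : Finset (Fin n ⊕ Fin n'))
    ⟨Sum.inl ⟨0, hn⟩, Finset.mem_univ _⟩ (Sum.elim l l') (Sum.elim u u')
    (by rintro (k | k) _ <;> [exact hl k; exact hl' k])
    (by rintro (k | k) _ <;> [exact hu k; exact hu' k])
  rwa [Fintype.sum_sum_type] at this

lemma sum_mem_posi {ι : Type*} {s : Finset ι} (hs : s.Nonempty) {f : ι → W}
    (hf : ∀ i ∈ s, f i ∈ Posi S) : (∑ i ∈ s, f i) ∈ Posi S := by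
  induction s using Finset.cons_induction with
  | empty => exact absurd hs (by simp)
  | cons a t ha ih =>
    rw [Finset.sum_cons]
    rcases t.eq_empty_or_nonempty with rfl | ht
    · simpa using hf a (by simp)
    · exact posi_add (hf a (by simp)) (ih ht (fun i hi => hf i (by simp [hi])))

lemma posi_posi : Posi (Posi S) ⊆ Posi S := by
  rintro v ⟨n, l, u, hn, hl, hu, rfl⟩
  exact sum_mem_posi ⟨⟨0, hn⟩, Finset.mem_univ _⟩ (fun k _ => posi_smul (hl k) (hu k))
end PosiLemmas
lemma bern_raise_eq {X : Type*} [Fintype X] [DecidableEq X] (n : ℕ) (m : X → ℕ) (hm : ∑ z, m z = n) :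
    bern (X := X) n m
      = ∑ z : X, (((m z : ℝ) + 1)/((n : ℝ)+1)) •
          bern (n+1) (fun w => m w + if w = z then 1 else 0) := by
  funext θ
  have hθ : ∑ z, θ.1 z = 1 := θ.2.2
  simp only [Finset.sum_apply, Pi.smul_apply, smul_eq_mul, bern, binomR]
  have key : ∀ z : X, (((m z : ℝ) + 1)/((n : ℝ)+1)) *
      ((((n+1).factorial : ℝ) / ∏ w, (((m w + if w = z then 1 else 0).factorial : ℝ))) *
        ∏ w, (θ.1 w) ^ (m w + if w = z then 1 else 0))
      = ((n.factorial : ℝ) / ∏ w, ((m w).factorial : ℝ)) * (θ.1 z * ∏ w, (θ.1 w) ^ (m w)) := by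
    intro z
    have hfact : ∏ w, (((m w + if w = z then 1 else 0).factorial : ℝ))
        = ((m z : ℝ) + 1) * ∏ w, ((m w).factorial : ℝ) := by
      have : ∀ w : X, (((m w + if w = z then 1 else 0).factorial : ℝ))
          = (if w = z then (m z : ℝ) + 1 else 1) * ((m w).factorial : ℝ) := by
        intro w
        by_cases h : w = z
        · subst h; simp only [eq_self_iff_true, if_true, Nat.factorial_succ]; push_cast; ring
        · simp [h]
      rw [Finset.prod_congr rfl (fun w _ => this w), Finset.prod_mul_distrib,
        Finset.prod_ite_eq' Finset.univ z (fun _ => (m z : ℝ) + 1)]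
      simp only [Finset.mem_univ, if_true]
    have hpow : ∏ w, (θ.1 w) ^ (m w + if w = z then 1 else 0)
        = θ.1 z * ∏ w, (θ.1 w) ^ (m w) := by
      have : ∀ w : X, (θ.1 w) ^ (m w + if w = z then 1 else 0)
          = (θ.1 w) ^ (m w) * (if w = z then θ.1 z else 1) := by
        intro w
        by_cases h : w = z
        · subst h; simp [pow_add]
        · simp [h]
      rw [Finset.prod_congr rfl (fun w _ => this w), Finset.prod_mul_distrib,
        Finset.prod_ite_eq' Finset.univ z (fun _ => θ.1 z)]
      simp [mul_comm]
    rw [hfact, hpow]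
    have h1 : ((m z : ℝ) + 1) ≠ 0 := by positivity
    have h2 : ((n : ℝ) + 1) ≠ 0 := by positivity
    have hP : (∏ w, ((m w).factorial : ℝ)) ≠ 0 := by
      apply Finset.prod_ne_zero_iff.2
      intro w _
      exact_mod_cast (Nat.factorial_pos (m w)).ne'
    have hfs : ((n+1).factorial : ℝ) = ((n : ℝ) + 1) * (n.factorial : ℝ) := by
      rw [Nat.factorial_succ]; push_cast; ring
    rw [hfs]
    field_simp
  rw [Finset.sum_congr rfl (fun z _ => key z), ← Finset.mul_sum, ← Finset.sum_mul, hθ, one_mul]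

lemma bern_mem_posi_raise {X : Type*} [Fintype X] [Nonempty X] (n : ℕ) (m : X → ℕ)
    (hm : ∑ z, m z = n) : bern (X := X) n m ∈ Posi (BernSet X (n+1)) := by
  classical
  rw [bern_raise_eq n m hm]
  refine mem_posi_finset Finset.univ Finset.univ_nonempty _ _ (fun z _ => by positivity)
    (fun z _ => ⟨fun w => m w + if w = z then 1 else 0, ?_, rfl⟩)
  simp [Finset.sum_add_distrib, hm]

lemma bernSet_subset_posi_succ {X : Type*} [Fintype X] [Nonempty X] (n : ℕ) :
    BernSet X n ⊆ Posi (BernSet X (n+1)) := by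
  rintro h ⟨m, hm, rfl⟩
  exact bern_mem_posi_raise n m hm

lemma posi_bernSet_mono {X : Type*} [Fintype X] [Nonempty X] {n N : ℕ} (h : n ≤ N) :
    Posi (BernSet X n) ⊆ Posi (BernSet X N) := by
  induction N, h using Nat.le_induction with
  | base => exact subset_rfl
  | succ N hN ih =>
    exact fun v hv => posi_posi (posi_mono (bernSet_subset_posi_succ N) (ih hv))

lemma posi_bernSetAll {X : Type*} [Fintype X] [Nonempty X] {v : Splx X → ℝ}
    (hv : v ∈ Posi (BernSetAll X)) : ∃ N, v ∈ Posi (BernSet X N) := by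
  obtain ⟨n, l, u, hn, hl, hu, rfl⟩ := hv
  have : ∀ k, ∃ d, u k ∈ BernSet X d := fun k => Set.mem_iUnion.1 (hu k)
  choose d hd using this
  refine ⟨Finset.univ.sup d, sum_mem_posi ⟨⟨0, hn⟩, Finset.mem_univ _⟩ (fun k _ => ?_)⟩
  exact posi_smul (hl k)
    (posi_bernSet_mono (Finset.le_sup (Finset.mem_univ k)) (mem_posi_self (hd k)))

lemma VN_mono {X : Type*} [Fintype X] {n N : ℕ} (h : n ≤ N) : VN X n ⊆ VN X N :=
  fun _ ⟨p, hp, he⟩ => ⟨p, hp.trans h, he⟩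

lemma VN_subset_Vall {X : Type*} [Fintype X] (n : ℕ) : VN X n ⊆ Vall X :=
  Set.subset_iUnion (VN X) n

lemma finite_subset_VN {X : Type*} [Fintype X] {O : Set (Splx X → ℝ)} (hf : O.Finite)
    (hO : O ⊆ Vall X) : ∃ n, O ⊆ VN X n := by
  refine Set.Finite.induction_on (motive := fun O _ => O ⊆ Vall X → ∃ n, O ⊆ VN X n) O hf
    (fun _ => ⟨0, Set.empty_subset _⟩) ?_ hO
  intro a s _ _ ih hins
  obtain ⟨n, hn⟩ := ih (fun x hx => hins (Set.mem_insert_of_mem a hx))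
  obtain ⟨na, hna⟩ := Set.mem_iUnion.1 (hins (Set.mem_insert a s))
  refine ⟨max na n, ?_⟩
  rintro x (rfl | hx)
  · exact VN_mono (le_max_left _ _) hna
  · exact VN_mono (le_max_right _ _) (hn hx)

lemma ltCone_of_ltConeN {X : Type*} [Fintype X] (n : ℕ) {u v : Splx X → ℝ}
    (h : ltCone ({0} ∪ Posi (BernSet X n)) u v) :
    ltCone ({0} ∪ Posi (BernSetAll X)) u v :=
  ⟨h.1.imp id (fun hh => posi_mono (Set.subset_iUnion (BernSet X) n) hh), h.2⟩


/-- a choice function `C̃` on `V(Σ_X)`, with the Bernstein ordering given by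
the cone `{0} ∪ Posi{B_m : m ∈ C_n, n ∈ ℕ}`, is coherent iff for every `n` its restriction
to nonempty finite subsets of `V_n(Σ_X)`, with the Bernstein ordering given by the cone
`{0} ∪ Posi{B_m : m ∈ C_n}`, is coherent. -/
theorem statement_19 (X : Type*) [Fintype X] [Nonempty X]
    (C : Set (Splx X → ℝ) → Set (Splx X → ℝ)) (hC : ∀ O, C O ⊆ O) :
    CoherentCF (Vall X) (ltCone ({0} ∪ Posi (BernSetAll X))) C ↔
      ∀ n : ℕ, CoherentCF (VN X n) (ltCone ({0} ∪ Posi (BernSet X n))) C := by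
  constructor
  · intro hco n
    obtain ⟨h1, h2, h3a, h3b, h4a, h4b⟩ := hco
    refine ⟨?_, ?_, ?_, ?_, ?_, ?_⟩
    · exact fun O hf hne hO => h1 O hf hne (hO.trans (VN_subset_Vall n))
    · exact fun u v hu hv hlt => h2 u v (VN_subset_Vall n hu) (VN_subset_Vall n hv)
        (ltCone_of_ltConeN n hlt)
    · exact fun O O1 O2 hOf hOne hOV h1f h1ne h1V h2f h2ne h2V =>
        h3a O O1 O2 hOf hOne (hOV.trans (VN_subset_Vall n)) h1f h1ne
          (h1V.trans (VN_subset_Vall n)) h2f h2ne (h2V.trans (VN_subset_Vall n))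
    · exact fun O O1 O2 hOf hOne hOV h1f h1ne h1V h2f h2ne h2V =>
        h3b O O1 O2 hOf hOne (hOV.trans (VN_subset_Vall n)) h1f h1ne
          (h1V.trans (VN_subset_Vall n)) h2f h2ne (h2V.trans (VN_subset_Vall n))
    · exact fun l hl O1 O2 h1f h1ne h1V h2f h2ne h2V =>
        h4a l hl O1 O2 h1f h1ne (h1V.trans (VN_subset_Vall n)) h2f h2ne
          (h2V.trans (VN_subset_Vall n))
    · exact fun u hu O1 O2 h1f h1ne h1V h2f h2ne h2V =>
        h4b u (VN_subset_Vall n hu) O1 O2 h1f h1ne (h1V.trans (VN_subset_Vall n)) h2f h2ne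
          (h2V.trans (VN_subset_Vall n))
  · intro h
    refine ⟨?_, ?_, ?_, ?_, ?_, ?_⟩
    · -- C1
      intro O hf hne hO
      obtain ⟨n, hn⟩ := finite_subset_VN hf hO
      exact (h n).1 O hf hne hn
    · -- C2
      intro u v hu hv hlt
      obtain ⟨nu, hnu⟩ := Set.mem_iUnion.1 hu
      obtain ⟨nv, hnv⟩ := Set.mem_iUnion.1 hv
      obtain ⟨hmem, hne⟩ := hlt
      rcases hmem with h0 | hp
      · exact absurd (by symm; exact sub_eq_zero.1 h0) hne
      · obtain ⟨N, hN⟩ := posi_bernSetAll hp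
        refine (h (max (max nu nv) N)).2.1 u v
          (VN_mono ((le_max_left nu nv).trans (le_max_left _ _)) hnu)
          (VN_mono ((le_max_right nu nv).trans (le_max_left _ _)) hnv)
          ⟨Or.inr (posi_bernSet_mono (le_max_right _ _) hN), hne⟩
    · -- C3a
      intro O O1 O2 hOf hOne hOV h1f h1ne h1V h2f h2ne h2V hc h12 h2O
      obtain ⟨n, hn⟩ := finite_subset_VN hOf hOV
      exact (h n).2.2.1 O O1 O2 hOf hOne hn h1f h1ne ((h12.trans h2O).trans hn)
        h2f h2ne (h2O.trans hn) hc h12 h2O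
    · -- C3b
      intro O O1 O2 hOf hOne hOV h1f h1ne h1V h2f h2ne h2V hc hO21
      obtain ⟨n, hn⟩ := finite_subset_VN (hOf.union (h1f.union h2f))
        (Set.union_subset hOV (Set.union_subset h1V h2V))
      exact (h n).2.2.2.1 O O1 O2 hOf hOne
        (fun x hx => hn (Set.mem_union_left _ hx)) h1f h1ne
        (fun x hx => hn (Set.mem_union_right _ (Set.mem_union_left _ hx))) h2f h2ne
        (fun x hx => hn (Set.mem_union_right _ (Set.mem_union_right _ hx))) hc hO21
    · -- C4a
      intro l hl O1 O2 h1f h1ne h1V h2f h2ne h2V h12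
      obtain ⟨n, hn⟩ := finite_subset_VN (h1f.union h2f) (Set.union_subset h1V h2V)
      exact (h n).2.2.2.2.1 l hl O1 O2 h1f h1ne
        (fun x hx => hn (Set.mem_union_left _ hx)) h2f h2ne
        (fun x hx => hn (Set.mem_union_right _ hx)) h12
    · -- C4b
      intro u hu O1 O2 h1f h1ne h1V h2f h2ne h2V h12
      obtain ⟨n, hn⟩ := finite_subset_VN ((Set.finite_singleton u).union (h1f.union h2f))
        (Set.union_subset (Set.singleton_subset_iff.2 hu) (Set.union_subset h1V h2V))
      exact (h n).2.2.2.2.2 u (hn (Set.mem_union_left _ rfl)) O1 O2 h1f h1ne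
        (fun x hx => hn (Set.mem_union_right _ (Set.mem_union_left _ hx))) h2f h2ne
        (fun x hx => hn (Set.mem_union_right _ (Set.mem_union_right _ hx))) h12

end ExchPaper
end
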